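/- arXiv:1406.1917 — 3 statements merged into one kernel-verified Lean document; each statement's English description precedes it below -/
import Mathlib

section
/- Let s≥1 be an integer and define U_n^{(s)}(x) by U_0=1, U_1=2x, and U_n(x)=2x·U_{n-1}(x)+((x²-1)(s-1)-1)·U_{n-2}(x) for n≥2. Then for every n≥1, the polynomial U_n^{(s)} has n distinct real roots in the open interval (-1,1). -/
open Polynomial Real

lemma aux_deg (s : ℕ) (U : ℕ → Polynomial ℝ)
    (h0 : U 0 = 1) (h1 : U 1 = 2 * Polynomial.X)
    (hrec : ∀ n, U (n + 2) = 2 * Polynomial.X * U (n + 1)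
      + ((Polynomial.X ^ 2 - 1) * Polynomial.C ((s : ℝ) - 1) - 1) * U n)
    (hs : 1 ≤ s) :
    ∀ n, (U n).natDegree ≤ n ∧ 0 < (U n).coeff n := by
  have hs1 : (1:ℝ) ≤ (s:ℝ) := by exact_mod_cast hs
  intro n
  induction n using Nat.strong_induction_on with
  | _ n ih =>
    match n with
    | 0 => simp [h0]
    | 1 =>
      constructor
      · rw [h1]
        calc (2 * X : ℝ[X]).natDegree ≤ (2:ℝ[X]).natDegree + (X:ℝ[X]).natDegree :=
              natDegree_mul_le
          _ ≤ 1 := by simp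
      · simp [h1]
    | (m+2) =>
      have ih1 := ih (m+1) (by omega)
      have ih0 := ih m (by omega)
      have expand : ((X^2 - 1) * C ((s:ℝ)-1) - 1) * U m
          = C ((s:ℝ)-1) * (X^2 * U m) - C ((s:ℝ)) * U m := by
        have h : (C ((s:ℝ)) : ℝ[X]) = C ((s:ℝ)-1) + 1 := by
          rw [← map_one (C : ℝ →+* ℝ[X]), ← map_add]; norm_num
        rw [h]; ring
      have expand2 : (2 * X * U (m+1) : ℝ[X]) = X * (2 * U (m+1)) := by ring
      constructor
      · rw [hrec m]
        apply le_trans (natDegree_add_le _ _)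
        apply max_le
        · calc (2 * X * U (m+1)).natDegree ≤ (2*X:ℝ[X]).natDegree + (U (m+1)).natDegree :=
                natDegree_mul_le
            _ ≤ 1 + (m+1) := by
                gcongr
                · calc (2 * X : ℝ[X]).natDegree ≤ (2:ℝ[X]).natDegree + (X:ℝ[X]).natDegree :=
                      natDegree_mul_le
                    _ ≤ 1 := by simp
                · exact ih1.1
            _ = m + 2 := by ring
        · calc (((X^2 - 1) * C ((s:ℝ)-1) - 1) * U m).natDegree
              ≤ ((X^2 - 1) * C ((s:ℝ)-1) - 1 : ℝ[X]).natDegree + (U m).natDegree :=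
                natDegree_mul_le
            _ ≤ 2 + m := by
                gcongr
                · apply le_trans (natDegree_sub_le _ _)
                  apply max_le
                  · apply le_trans natDegree_mul_le
                    have hx2 : ((X:ℝ[X])^2 - 1).natDegree ≤ 2 := by
                      apply le_trans (natDegree_sub_le _ _)
                      simp
                    rw [natDegree_C]
                    simpa using hx2
                  · simp
                · exact ih0.1
            _ = m + 2 := by ring
      · have c1 : (2 * X * U (m+1) : ℝ[X]).coeff (m+2) = 2 * (U (m+1)).coeff (m+1) := by
          rw [expand2, coeff_X_mul]
          simp
        have c2 : ((C ((s:ℝ)-1)) * (X^2 * U m)).coeff (m+2) = ((s:ℝ)-1) * (U m).coeff m := by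
          rw [coeff_C_mul, coeff_X_pow_mul]
        have c3 : ((C ((s:ℝ))) * U m).coeff (m+2) = 0 := by
          rw [coeff_C_mul, coeff_eq_zero_of_natDegree_lt (show (U m).natDegree < m + 2 by omega),
            mul_zero]
        rw [hrec m, coeff_add, expand, coeff_sub, c1, c2, c3]
        nlinarith [ih1.2, ih0.2]

lemma aux_trig (s : ℕ) (U : ℕ → Polynomial ℝ)
    (h0 : U 0 = 1) (h1 : U 1 = 2 * Polynomial.X)
    (hrec : ∀ n, U (n + 2) = 2 * Polynomial.X * U (n + 1)
      + ((Polynomial.X ^ 2 - 1) * Polynomial.C ((s : ℝ) - 1) - 1) * U n)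
    (hs : 1 ≤ s) (α : ℝ) :
    ∀ m : ℕ, Real.sin α * (U m).eval
        (Real.sqrt s / Real.sqrt (Real.sin α ^ 2 + s * Real.cos α ^ 2) * Real.cos α)
      = (Real.sqrt s / Real.sqrt (Real.sin α ^ 2 + s * Real.cos α ^ 2)) ^ m
        * Real.sin (((m:ℝ)+1) * α) := by
  have hs1 : (1:ℝ) ≤ (s:ℝ) := by exact_mod_cast hs
  have hpc := Real.sin_sq_add_cos_sq α
  set D : ℝ := Real.sin α ^ 2 + s * Real.cos α ^ 2 with hD
  have hDpos : 0 < D := by nlinarith [sq_nonneg (Real.cos α), sq_nonneg (Real.sin α)]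
  set r : ℝ := Real.sqrt s / Real.sqrt D with hr
  set x : ℝ := r * Real.cos α with hx
  have hr2 : r ^ 2 = s / D := by
    rw [hr, div_pow, Real.sq_sqrt (by positivity : (0:ℝ) ≤ (s:ℝ)),
      Real.sq_sqrt hDpos.le]
  have hcc : (x ^ 2 - 1) * ((s:ℝ) - 1) - 1 = -r ^ 2 := by
    have hx2 : x ^ 2 = (s / D) * Real.cos α ^ 2 := by rw [hx, mul_pow, hr2]
    rw [hx2, hr2]
    field_simp
    nlinarith [hpc]
  intro m
  induction m using Nat.strong_induction_on with
  | _ m ih =>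
    match m with
    | 0 => simp [h0]
    | 1 =>
      rw [h1]
      simp only [eval_mul, eval_ofNat, eval_X]
      rw [show ((1:ℕ):ℝ) + 1 = 2 by norm_num, Real.sin_two_mul, hx]
      ring
    | (k+2) =>
      have e1 := ih (k+1) (by omega)
      have e0 := ih k (by omega)
      push_cast at e1 e0 ⊢
      rw [hrec k]
      simp only [eval_add, eval_mul, eval_sub, eval_pow, eval_X, eval_one, eval_C, eval_ofNat]
      have h3 : Real.sin (((k:ℝ) + 2 + 1) * α)
          = 2 * Real.cos α * Real.sin (((k:ℝ) + 1 + 1) * α) - Real.sin (((k:ℝ) + 1) * α) := by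
        rw [show ((k:ℝ) + 2 + 1) * α = ((k:ℝ) + 1 + 1) * α + α by ring,
          show ((k:ℝ) + 1) * α = ((k:ℝ) + 1 + 1) * α - α by ring,
          Real.sin_add, Real.sin_sub]
        ring
      calc Real.sin α * (2 * x * eval x (U (k + 1)) + ((x ^ 2 - 1) * ((s:ℝ) - 1) - 1) * eval x (U k))
          = 2 * x * (Real.sin α * eval x (U (k+1)))
            + ((x ^ 2 - 1) * ((s:ℝ) - 1) - 1) * (Real.sin α * eval x (U k)) := by ring
        _ = 2 * (r * Real.cos α) * (r ^ (k+1) * Real.sin (((k:ℝ) + 1 + 1) * α))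
            + (-r^2) * (r ^ k * Real.sin (((k:ℝ) + 1) * α)) := by rw [e1, e0, hcc, hx]
        _ = r ^ (k + 2) * Real.sin (((k:ℝ) + 2 + 1) * α) := by rw [h3]; ring

lemma aux_inj (s : ℕ) (hs : 1 ≤ s) {c1 c2 : ℝ}
    (h : Real.sqrt s / Real.sqrt (1 + ((s:ℝ)-1) * c1^2) * c1
       = Real.sqrt s / Real.sqrt (1 + ((s:ℝ)-1) * c2^2) * c2) : c1 = c2 := by
  have hs1 : (1:ℝ) ≤ (s:ℝ) := by exact_mod_cast hs
  have hp1 : (0:ℝ) < 1 + ((s:ℝ)-1) * c1^2 := by nlinarith [sq_nonneg c1]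
  have hp2 : (0:ℝ) < 1 + ((s:ℝ)-1) * c2^2 := by nlinarith [sq_nonneg c2]
  set d1 := Real.sqrt (1 + ((s:ℝ)-1) * c1^2) with hd1
  set d2 := Real.sqrt (1 + ((s:ℝ)-1) * c2^2) with hd2
  have hd1p : 0 < d1 := Real.sqrt_pos.mpr hp1
  have hd2p : 0 < d2 := Real.sqrt_pos.mpr hp2
  have hd1sq : d1 ^ 2 = 1 + ((s:ℝ)-1) * c1^2 := Real.sq_sqrt hp1.le
  have hd2sq : d2 ^ 2 = 1 + ((s:ℝ)-1) * c2^2 := Real.sq_sqrt hp2.le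
  have hsp : (0:ℝ) < Real.sqrt s := Real.sqrt_pos.mpr (by linarith)
  have key : c1 * d2 = c2 * d1 := by
    field_simp at h
    nlinarith [h, hsp, hd1p, hd2p]
  have hsq : c1 ^ 2 = c2 ^ 2 := by
    have h2 : (c1 * d2) ^ 2 = (c2 * d1) ^ 2 := by rw [key]
    rw [mul_pow, mul_pow, hd1sq, hd2sq] at h2
    nlinarith [h2]
  rcases mul_self_eq_mul_self_iff.mp (show c1 * c1 = c2 * c2 by nlinarith [hsq]) with h' | h'
  · exact h'
  · have : c1 * (d1 + d2) = 0 := by nlinarith [key, h']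
    rcases mul_eq_zero.mp this with h0 | h0
    · rw [h0] at h' ⊢; linarith
    · linarith [hd1p, hd2p]

theorem stmt_3 (s : ℕ) (hs : 1 ≤ s) (U : ℕ → Polynomial ℝ)
    (h0 : U 0 = 1) (h1 : U 1 = 2 * Polynomial.X)
    (hrec : ∀ n, U (n + 2) = 2 * Polynomial.X * U (n + 1)
      + ((Polynomial.X ^ 2 - 1) * Polynomial.C ((s : ℝ) - 1) - 1) * U n) :
    ∀ n : ℕ, 1 ≤ n →
      (U n).roots.toFinset.card = n ∧
      ∀ x ∈ (U n).roots.toFinset, x ∈ Set.Ioo (-1 : ℝ) 1 := by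
  intro n hn
  have hs1 : (1:ℝ) ≤ (s:ℝ) := by exact_mod_cast hs
  have hdeg := aux_deg s U h0 h1 hrec hs
  have hUne : U n ≠ 0 := by
    intro h
    have h2 := (hdeg n).2
    rw [h] at h2
    simp at h2
  set A : ℕ → ℝ := fun k => ((k:ℝ)+1) * Real.pi / ((n:ℝ)+1) with hA
  have hn1 : (0:ℝ) < (n:ℝ) + 1 := by positivity
  have hApos : ∀ k : ℕ, 0 < A k := fun k => by
    rw [hA]
    have := Real.pi_pos
    positivity
  have hAlt : ∀ k < n, A k < Real.pi := by
    intro k hk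
    rw [hA]
    simp only
    rw [div_lt_iff₀ hn1]
    have hklt : (k:ℝ)+1 < (n:ℝ)+1 := by
      have : (k:ℝ) < (n:ℝ) := by exact_mod_cast hk
      linarith
    nlinarith [Real.pi_pos]
  have hsinpos : ∀ k < n, 0 < Real.sin (A k) := fun k hk =>
    Real.sin_pos_of_pos_of_lt_pi (hApos k) (hAlt k hk)
  set F : ℕ → ℝ := fun k =>
    Real.sqrt s / Real.sqrt (Real.sin (A k) ^ 2 + s * Real.cos (A k) ^ 2) * Real.cos (A k)
    with hF
  have hzero : ∀ k < n, (U n).eval (F k) = 0 := by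
    intro k hk
    have h := aux_trig s U h0 h1 hrec hs (A k) n
    have hsin0 : Real.sin (((n:ℝ)+1) * A k) = 0 := by
      have harg : ((n:ℝ)+1) * A k = ((k+1:ℕ):ℝ) * Real.pi := by
        rw [hA]
        push_cast
        field_simp
      rw [harg, Real.sin_nat_mul_pi]
    rw [hsin0, mul_zero] at h
    rcases mul_eq_zero.mp h with h' | h'
    · exact absurd h' (ne_of_gt (hsinpos k hk))
    · exact h'
  have hDconv : ∀ a : ℝ, Real.sin a ^ 2 + (s:ℝ) * Real.cos a ^ 2
      = 1 + ((s:ℝ)-1) * (Real.cos a)^2 := by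
    intro a
    nlinarith [Real.sin_sq_add_cos_sq a]
  have hinj : Set.InjOn F (Finset.range n : Finset ℕ) := by
    intro k1 hk1 k2 hk2 he
    simp only [Finset.coe_range, Set.mem_Iio] at hk1 hk2
    rw [hF] at he
    simp only at he
    rw [hDconv (A k1), hDconv (A k2)] at he
    have hc := aux_inj s hs he
    have hA12 : A k1 = A k2 :=
      Real.injOn_cos ⟨(hApos k1).le, (hAlt k1 hk1).le⟩ ⟨(hApos k2).le, (hAlt k2 hk2).le⟩ hc
    rw [hA] at hA12
    simp only at hA12
    rw [div_eq_div_iff (ne_of_gt hn1) (ne_of_gt hn1)] at hA12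
    have hπ : (0:ℝ) < Real.pi := Real.pi_pos
    have : (k1:ℝ) = (k2:ℝ) := by
      have h1 := mul_right_cancel₀ (ne_of_gt hn1) hA12
      have h2 := mul_right_cancel₀ (ne_of_gt hπ) h1
      linarith
    exact_mod_cast this
  set T : Finset ℝ := (Finset.range n).image F with hT
  have hTcard : T.card = n := by
    rw [hT, Finset.card_image_of_injOn hinj, Finset.card_range]
  have hsub : T ⊆ (U n).roots.toFinset := by
    intro x hx
    rw [hT, Finset.mem_image] at hx
    obtain ⟨k, hk, rfl⟩ := hx
    rw [Multiset.mem_toFinset, Polynomial.mem_roots hUne]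
    exact hzero k (Finset.mem_range.mp hk)
  have hle : (U n).roots.toFinset.card ≤ n :=
    le_trans (Multiset.toFinset_card_le _) (le_trans (Polynomial.card_roots' _) (hdeg n).1)
  have heq : T = (U n).roots.toFinset :=
    Finset.eq_of_subset_of_card_le hsub (by rw [hTcard]; exact hle)
  constructor
  · rw [← heq, hTcard]
  · intro x hx
    rw [← heq, hT, Finset.mem_image] at hx
    obtain ⟨k, hk, rfl⟩ := hx
    have hk' := Finset.mem_range.mp hk
    have hsin := hsinpos k hk'
    have hpc := Real.sin_sq_add_cos_sq (A k)
    have hc2 : Real.cos (A k)^2 < 1 := by nlinarith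
    have hD : 0 < Real.sin (A k)^2 + (s:ℝ) * Real.cos (A k)^2 := by
      nlinarith [sq_nonneg (Real.cos (A k))]
    have hx2 : (F k)^2 < 1 := by
      rw [hF]
      simp only
      rw [mul_pow, div_pow, Real.sq_sqrt (by positivity : (0:ℝ) ≤ (s:ℝ)), Real.sq_sqrt hD.le]
      rw [div_mul_eq_mul_div, div_lt_one hD]
      nlinarith
    have habs : |F k| < 1 := (sq_lt_one_iff_abs_lt_one (F k)).mp hx2
    exact Set.mem_Ioo.mpr (abs_lt.mp habs)
end

section
/- Let m≥1, e≥3 be reals with e≤2m+1 and e≤3m, and for x∈[−1,1] let q_0(x)=x+u(x)+v(x), q_1(x)=x+ωu(x)+ω²v(x) with ω=e^{2πi/3} and u,v the Cardano functions for (q−x)³+e(1−x²)(q−x)+2mx(1−x²)=0. Then ‖q_1(x)‖² − q_0(x)² = −3x(u(x)+v(x)) − 3u(x)v(x) ≥ 0 for all x∈[−1,1], with equality exactly at x=±1. In particular ‖q_1(x)‖ ≥ |q_0(x)| on [−1,1]. -/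
/-- The real cube root of a real number (defined for negative inputs as well). -/
noncomputable def cbrt (y : ℝ) : ℝ := Real.sign y * |y| ^ ((1 : ℝ) / 3)

lemma cbrt_cube (y : ℝ) : cbrt y ^ 3 = y := by
  unfold cbrt
  rw [mul_pow, ← Real.rpow_natCast (|y| ^ ((1:ℝ)/3)) 3, ← Real.rpow_mul (abs_nonneg y)]
  norm_num
  rcases lt_trichotomy y 0 with h | h | h
  · rw [Real.sign_of_neg h, abs_of_neg h]; ring
  · simp [h]
  · rw [Real.sign_of_pos h, abs_of_pos h]; ring

lemma cbrt_zero : cbrt 0 = 0 := by simp [cbrt]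

lemma cbrt_mono : Monotone cbrt := by
  intro a b hab
  by_contra h
  push_neg at h
  have h3 : Odd 3 := ⟨1, by norm_num⟩
  have := h3.strictMono_pow (R := ℝ) h
  simp only [cbrt_cube] at this
  exact absurd hab (not_le.mpr this)

lemma cbrt_neg (y : ℝ) : cbrt (-y) = - cbrt y := by
  simp [cbrt, Real.sign_neg]

lemma cbrt_eq_zero {y : ℝ} (h : cbrt y = 0) : y = 0 := by
  have := cbrt_cube y; rw [h] at this; simpa using this.symm

lemma cbrt_nonneg {y : ℝ} (h : 0 ≤ y) : 0 ≤ cbrt y := by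
  simpa [cbrt_zero] using cbrt_mono h

lemma cbrt_nonpos {y : ℝ} (h : y ≤ 0) : cbrt y ≤ 0 := by
  simpa [cbrt_zero] using cbrt_mono h

set_option maxHeartbeats 2000000 in
theorem stmt_18 (m e : ℝ) (hm : 1 ≤ m) (he : 3 ≤ e)
    (he1 : e ≤ 2 * m + 1) (he2 : e ≤ 3 * m) :
    ∀ x ∈ Set.Icc (-1 : ℝ) 1,
      ∀ u v : ℝ,
      u = cbrt (1 - x ^ 2) * cbrt (-m * x + Real.sqrt (m ^ 2 * x ^ 2 + e ^ 3 * (1 - x ^ 2) / 27)) →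
      v = cbrt (1 - x ^ 2) * cbrt (-m * x - Real.sqrt (m ^ 2 * x ^ 2 + e ^ 3 * (1 - x ^ 2) / 27)) →
      ∀ q0 : ℝ, q0 = x + u + v →
      ∀ ω q1 : ℂ, ω = Complex.exp (2 * Real.pi * Complex.I / 3) →
      q1 = (x : ℂ) + ω * (u : ℂ) + ω ^ 2 * (v : ℂ) →
      Complex.normSq q1 - q0 ^ 2 = -3 * x * (u + v) - 3 * (u * v) ∧
      0 ≤ Complex.normSq q1 - q0 ^ 2 ∧
      (Complex.normSq q1 - q0 ^ 2 = 0 ↔ x = 1 ∨ x = -1) ∧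
      |q0| ≤ ‖q1‖ := by
  rintro x ⟨hx1, hx2⟩ u v hu hv q0 hq0 ω q1 hω hq1
  have hsq3 : Real.sqrt 3 ^ 2 = 3 := Real.sq_sqrt (by norm_num)
  -- explicit value of ω
  have hωval : ω = Complex.mk (-(1/2)) (Real.sqrt 3 / 2) := by
    have h1 : (2 * Real.pi * Complex.I / 3) = ((2 * Real.pi / 3 : ℝ) : ℂ) * Complex.I := by
      push_cast; ring
    rw [hω, h1, Complex.exp_mul_I, ← Complex.ofReal_cos, ← Complex.ofReal_sin]
    have h2 : (2 * Real.pi / 3 : ℝ) = Real.pi - Real.pi / 3 := by ring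
    rw [h2, Real.cos_pi_sub, Real.cos_pi_div_three, Real.sin_pi_sub, Real.sin_pi_div_three]
    apply Complex.ext <;> simp
  -- the algebraic identity
  have hid : Complex.normSq q1 - q0 ^ 2 = -3 * x * (u + v) - 3 * (u * v) := by
    rw [Complex.normSq_apply, hq1, hωval, hq0]
    simp only [pow_two, Complex.add_re, Complex.add_im, Complex.mul_re, Complex.mul_im,
      Complex.ofReal_re, Complex.ofReal_im]
    have h4 : Real.sqrt 3 ^ 4 = 9 := by nlinarith [hsq3]
    linear_combination (x*v*(-1/2)+u*v*(-1/4)+u^2*(1/4)+v^2*(1/8)) * hsq3 + (v^2/16) * h4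
  -- notation
  set S := Real.sqrt (m ^ 2 * x ^ 2 + e ^ 3 * (1 - x ^ 2) / 27) with hSdef
  set c := 1 - x ^ 2 with hcdef
  have hc : 0 ≤ c := by nlinarith
  have hS0 : 0 ≤ S := Real.sqrt_nonneg _
  have he3 : (0:ℝ) < e ^ 3 := by positivity
  have hS2 : S ^ 2 = m ^ 2 * x ^ 2 + e ^ 3 * c / 27 := by
    rw [hSdef]
    exact Real.sq_sqrt (by nlinarith [sq_nonneg (m * x), mul_nonneg he3.le hc])
  clear_value S
  clear_value c
  set a := -m * x + S with hadef
  set b := -m * x - S with hbdef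
  clear_value a
  clear_value b
  -- u * v ≤ 0
  have hcabnn : 0 ≤ cbrt c := cbrt_nonneg hc
  have hab : a * b ≤ 0 := by
    have : a * b = m ^ 2 * x ^ 2 - S ^ 2 := by rw [hadef, hbdef]; ring
    rw [this, hS2]
    have h27 : 0 ≤ e ^ 3 * c / 27 := div_nonneg (mul_nonneg he3.le hc) (by norm_num)
    linarith
  have hcab : cbrt a * cbrt b ≤ 0 := by
    rcases mul_nonpos_iff.mp hab with ⟨ha, hb⟩ | ⟨ha, hb⟩
    · exact mul_nonpos_iff.mpr (Or.inl ⟨cbrt_nonneg ha, cbrt_nonpos hb⟩)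
    · exact mul_nonpos_iff.mpr (Or.inr ⟨cbrt_nonpos ha, cbrt_nonneg hb⟩)
  have huv : u * v ≤ 0 := by
    rw [hu, hv]
    nlinarith [sq_nonneg (cbrt c), hcab]
  -- x * (u + v) ≤ 0
  have hxuv : x * (u + v) ≤ 0 := by
    have hkey : x * (cbrt a + cbrt b) ≤ 0 := by
      rcases le_total 0 x with hx | hx
      · have hle : a ≤ -b := by rw [hadef, hbdef]; nlinarith
        have := cbrt_mono hle
        rw [cbrt_neg] at this
        exact mul_nonpos_of_nonneg_of_nonpos hx (by linarith)
      · have hle : -a ≤ b := by rw [hadef, hbdef]; nlinarith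
        have := cbrt_mono hle
        rw [cbrt_neg] at this
        exact mul_nonpos_of_nonpos_of_nonneg hx (by linarith)
    have : x * (u + v) = cbrt c * (x * (cbrt a + cbrt b)) := by rw [hu, hv]; ring
    rw [this]
    exact mul_nonpos_of_nonneg_of_nonpos hcabnn hkey
  have hnn : 0 ≤ Complex.normSq q1 - q0 ^ 2 := by rw [hid]; linarith
  refine ⟨hid, hnn, ?_, ?_⟩
  · constructor
    · intro h0
      rw [hid] at h0
      have huv0 : u * v = 0 := by linarith
      have hc0 : c = 0 := by
        rw [hu, hv] at huv0
        have : cbrt c = 0 ∨ cbrt a = 0 ∨ cbrt b = 0 := by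
          rcases mul_eq_zero.mp huv0 with h | h
          · rcases mul_eq_zero.mp h with h | h
            · exact Or.inl h
            · exact Or.inr (Or.inl h)
          · rcases mul_eq_zero.mp h with h | h
            · exact Or.inl h
            · exact Or.inr (Or.inr h)
        rcases this with h | h | h
        · exact cbrt_eq_zero h
        · have ha0 : a = 0 := cbrt_eq_zero h
          have hsm : S = m * x := by rw [hadef] at ha0; linarith
          have h9 : e ^ 3 * c = 0 := by nlinarith [hS2, hsm]
          exact (mul_eq_zero.mp h9).resolve_left (ne_of_gt he3)
        · have hb0 : b = 0 := cbrt_eq_zero h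
          have hsm : S = -(m * x) := by rw [hbdef] at hb0; linarith
          have h9 : e ^ 3 * c = 0 := by nlinarith [hS2, hsm]
          exact (mul_eq_zero.mp h9).resolve_left (ne_of_gt he3)
      have : (x - 1) * (x + 1) = 0 := by rw [hcdef] at hc0; nlinarith
      rcases mul_eq_zero.mp this with h | h
      · exact Or.inl (by linarith)
      · exact Or.inr (by linarith)
    · intro h
      have hc0 : c = 0 := by rcases h with rfl | rfl <;> norm_num [hcdef]
      have hu0 : u = 0 := by rw [hu, hc0, cbrt_zero, zero_mul]
      have hv0 : v = 0 := by rw [hv, hc0, cbrt_zero, zero_mul]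
      rw [hid, hu0, hv0]; ring
  · rw [← Real.sqrt_sq_eq_abs, Complex.norm_def]
    exact Real.sqrt_le_sqrt (by linarith)
end

section
/- Let m≥1, e≥3 be reals and q_1(x)=x+ωu(x)+ω²v(x) as above (ω=e^{2πi/3}). Then q_1(x) ≠ 0 for every x∈[−1,1]. -/
lemma cbrt_inj {a b : ℝ} (h : cbrt a = cbrt b) : a = b := by
  have := cbrt_cube a
  rw [h, cbrt_cube] at this
  exact this.symm

lemma cbrt_pos {y : ℝ} (h : 0 < y) : 0 < cbrt y := by
  unfold cbrt
  rw [Real.sign_of_pos h, one_mul]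
  exact Real.rpow_pos_of_pos (by rwa [abs_of_pos h]) _

set_option maxRecDepth 4000 in
theorem stmt_19 (m e : ℝ) (hm : 1 ≤ m) (he : 3 ≤ e) :
    ∀ x ∈ Set.Icc (-1 : ℝ) 1,
      ∀ u v : ℝ,
      u = cbrt (1 - x ^ 2) * cbrt (-m * x + Real.sqrt (m ^ 2 * x ^ 2 + e ^ 3 * (1 - x ^ 2) / 27)) →
      v = cbrt (1 - x ^ 2) * cbrt (-m * x - Real.sqrt (m ^ 2 * x ^ 2 + e ^ 3 * (1 - x ^ 2) / 27)) →
      ∀ ω : ℂ, ω = Complex.exp (2 * Real.pi * Complex.I / 3) →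
      (x : ℂ) + ω * (u : ℂ) + ω ^ 2 * (v : ℂ) ≠ 0 := by
  intro x hx u v hu hv ω hω hz
  -- ω explicitly
  have hωe : ω = -1/2 + (Real.sqrt 3 / 2 : ℝ) * Complex.I := by
    rw [hω]
    have h : (2 * Real.pi * Complex.I / 3) = ((2 * Real.pi / 3 : ℝ) : ℂ) * Complex.I := by
      push_cast; ring
    have hc : Real.cos (2 * Real.pi / 3) = -(1/2) := by
      have h2 : 2 * Real.pi / 3 = Real.pi - Real.pi / 3 := by ring
      rw [h2, Real.cos_pi_sub, Real.cos_pi_div_three]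
    have hs : Real.sin (2 * Real.pi / 3) = Real.sqrt 3 / 2 := by
      have h2 : 2 * Real.pi / 3 = Real.pi - Real.pi / 3 := by ring
      rw [h2, Real.sin_pi_sub, Real.sin_pi_div_three]
    rw [h, Complex.exp_mul_I, ← Complex.ofReal_cos, ← Complex.ofReal_sin, hc, hs]
    push_cast; ring
  have hsq : ((Real.sqrt 3 : ℝ) : ℂ) ^ 2 = 3 := by
    rw [← Complex.ofReal_pow, Real.sq_sqrt (by norm_num : (0:ℝ) ≤ 3)]
    norm_num
  -- rewrite z in real/imaginary parts
  have hz2 : ((x - u/2 - v/2 : ℝ) : ℂ) + ((Real.sqrt 3 / 2 * (u - v) : ℝ) : ℂ) * Complex.I = 0 := by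
    rw [← hz, hωe]
    have hI : Complex.I ^ 2 = -1 := Complex.I_sq
    push_cast
    linear_combination (-(Complex.I^2/4) * (v:ℂ)) * hsq + (-(3/4) * (v:ℂ)) * hI
  have hre : x - u/2 - v/2 = 0 := by
    have := congrArg Complex.re hz2
    simpa only [Complex.add_re, Complex.mul_re, Complex.ofReal_re, Complex.ofReal_im,
      Complex.I_re, Complex.I_im, Complex.zero_re, mul_zero, mul_one, zero_mul,
      sub_zero, zero_sub, add_zero, neg_zero] using this
  have him : Real.sqrt 3 / 2 * (u - v) = 0 := by
    have := congrArg Complex.im hz2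
    simpa only [Complex.add_im, Complex.mul_im, Complex.ofReal_re, Complex.ofReal_im,
      Complex.I_re, Complex.I_im, Complex.zero_im, mul_zero, mul_one, zero_mul,
      add_zero, zero_add] using this
  have h3 : Real.sqrt 3 / 2 ≠ 0 := by positivity
  have huv : u = v := by
    rcases mul_eq_zero.mp him with h | h
    · exact absurd h h3
    · linarith
  -- now two cases on x
  have hx1 : -1 ≤ x := hx.1
  have hx2 : x ≤ 1 := hx.2
  have hxx : x ^ 2 ≤ 1 := by nlinarith
  rcases eq_or_lt_of_le hxx with hx0 | hx0
  · -- x² = 1, so u = v = 0 and x - u/2 - v/2 = x ≠ 0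
    have h0 : (1 : ℝ) - x ^ 2 = 0 := by linarith
    rw [h0, cbrt_zero, zero_mul] at hu hv
    nlinarith
  · -- x² < 1
    have hpos : (0:ℝ) < 1 - x ^ 2 := by linarith
    have hs : 0 < Real.sqrt (m ^ 2 * x ^ 2 + e ^ 3 * (1 - x ^ 2) / 27) := by
      apply Real.sqrt_pos.mpr
      have : 0 < e ^ 3 * (1 - x ^ 2) / 27 := by positivity
      positivity
    set s := Real.sqrt (m ^ 2 * x ^ 2 + e ^ 3 * (1 - x ^ 2) / 27) with hsdef
    have hcb : 0 < cbrt (1 - x ^ 2) := cbrt_pos hpos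
    rw [hu, hv] at huv
    have h4 : cbrt (-m * x + s) = cbrt (-m * x - s) :=
      mul_left_cancel₀ (ne_of_gt hcb) huv
    have := cbrt_inj h4
    linarith
end
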